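/- arXiv:2108.03610 — 2 statements merged into one kernel-verified Lean document; each statement's English description precedes it below -/
import Mathlib

section
/- Let X be a topological space, x ∈ X, and let H be a subset of π₁(X, x). If β is a path in X with β(0) = x and α is a loop at β(1) whose class [α] belongs to π_{[β]⁻¹H[β]}^qs(X, β(1)), where [β]⁻¹H[β] = { [β⁻¹ * h * β] | [h] ∈ H }, then [β * α * β⁻¹] ∈ π_H^qs(X, x). Consequently, the subgroup generated by all such classes [β * α * β⁻¹] equals π_H^qs(X, x) when H is a subgroup. -/
/-!
Homotopic closeness is compatible with concatenation and reversal of paths. For a concatenation,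
split a given partition at `1/2` and rescale both halves; this produces partitions of the two
factors that may repeat points, which is harmless because any partition can be replaced by the
strictly increasing enumeration of its points. Conjugating a witnessing pair `(f, h')` for `[α]`
by `β` then witnesses `[β * α * β⁻¹] ∈ π_H^qs(X, x)`. For a subgroup `H` the same compatibility
makes `π_H^qs(X, x)` a subgroup, and it is generated by these conjugates because `β` may be
constant.
-/

open unitInterval

noncomputable section

attribute [local instance] Path.Homotopic.setoid

variable {X Y : Type*} [TopologicalSpace X] [TopologicalSpace Y]

/-- `HClose f g` : the path `f` is homotopically close to the path `g` rel `∂I`: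
for every partition `0 = t₀ < t₁ < ⋯ < tₙ = 1` and every sequence of open sets
`U₁, …, Uₙ` with `g [tᵢ₋₁, tᵢ] ⊆ Uᵢ`, there is a path `γ`, homotopic to `f` rel `∂I`,
with `γ [tᵢ₋₁, tᵢ] ⊆ Uᵢ` and `γ tᵢ = g tᵢ` for all `i`. -/
def HClose {a b : X} (f g : Path a b) : Prop :=
  ∀ (n : ℕ) (t : Fin (n + 1) → I), t 0 = 0 → t (Fin.last n) = 1 → StrictMono t →
    ∀ U : Fin n → Set X, (∀ i, IsOpen (U i)) →
      (∀ i : Fin n, g '' Set.Icc (t i.castSucc) (t i.succ) ⊆ U i) →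
      ∃ γ : Path a b,
        (∀ i : Fin n, γ '' Set.Icc (t i.castSucc) (t i.succ) ⊆ U i) ∧
        (∀ i : Fin (n + 1), γ (t i) = g (t i)) ∧ γ.Homotopic f

/-- The class of a loop at `x` as an element of the fundamental group. -/
def pathClass {x : X} (f : Path x x) : FundamentalGroup X x :=
  FundamentalGroup.fromPath ⟦f⟧

/-- The `H`-quasi-small loop set `π_H^qs(X, x)`. -/
def qsSet (x : X) (H : Set (FundamentalGroup X x)) : Set (FundamentalGroup X x) :=
  { p | ∃ f h : Path x x, pathClass f = p ∧ pathClass h ∈ H ∧ HClose f h }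

/-- The quasi-small loop group `π₁^qs(X, x)`. -/
def qs (x : X) : Set (FundamentalGroup X x) :=
  qsSet x (⊥ : Subgroup (FundamentalGroup X x))

/-- The Spanier group of `(X, x)` with respect to the cover `𝒰`. -/
def spanierCover (x : X) (𝒰 : Set (Set X)) : Subgroup (FundamentalGroup X x) :=
  Subgroup.closure { p | ∃ (y : X) (u : Path x y) (v : Path y y) (U : Set X),
    U ∈ 𝒰 ∧ Set.range v ⊆ U ∧ p = pathClass ((u.trans v).trans u.symm) }

/-- The (unbased) Spanier group `π₁^sp(X, x)`. -/
def spanierGroup (x : X) : Subgroup (FundamentalGroup X x) :=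
  ⨅ (𝒰 : Set (Set X)) (_ : ∀ U ∈ 𝒰, IsOpen U) (_ : ⋃₀ 𝒰 = Set.univ), spanierCover x 𝒰

/-- The small generated subgroup `π₁^sg(X, x)`. -/
def smallGenerated (x : X) : Subgroup (FundamentalGroup X x) :=
  Subgroup.closure { p | ∃ (y : X) (β : Path x y) (α : Path y y),
    HClose α (Path.refl y) ∧ p = pathClass ((β.trans α).trans β.symm) }

/-- `X` is homotopically path Hausdorff relative to `H ⊆ π₁(X, x)`. -/
def HPHausdorffRel (x : X) (H : Set (FundamentalGroup X x)) : Prop :=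
  ∀ (y : X) (α β : Path x y), pathClass (α.trans β.symm) ∉ H →
    ∃ (n : ℕ) (t : Fin (n + 1) → I), t 0 = 0 ∧ t (Fin.last n) = 1 ∧ StrictMono t ∧
      ∃ U : Fin n → Set X, (∀ i, IsOpen (U i)) ∧
        (∀ i : Fin n, α '' Set.Icc (t i.castSucc) (t i.succ) ⊆ U i) ∧
        ∀ γ : Path x y, (∀ i : Fin n, γ '' Set.Icc (t i.castSucc) (t i.succ) ⊆ U i) →
          (∀ i : Fin (n + 1), γ (t i) = α (t i)) → pathClass (γ.trans β.symm) ∉ H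

open Set

theorem Fin.exists_mem_Icc_castSucc_succ {α : Type*} [LinearOrder α] {m : ℕ}
    (u : Fin (m + 1) → α) {a b : Fin (m + 1)} (hab : a < b) {w : α} (hw : w ∈ Icc (u a) (u b)) :
    ∃ j : Fin m, a ≤ j.castSucc ∧ j.succ ≤ b ∧ w ∈ Icc (u j.castSucc) (u j.succ) := by
  induction b using Fin.induction with
  | zero => exact absurd hab (Fin.not_lt_zero a)
  | succ j ih =>
    rcases (Fin.le_castSucc_iff.2 hab).lt_or_eq with ha | rfl
    · by_cases hwj : w ≤ u j.castSucc
      · obtain ⟨k, hak, hkj, hk⟩ := ih ha ⟨hw.1, hwj⟩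
        exact ⟨k, hak, hkj.trans j.castSucc_le_succ, hk⟩
      · exact ⟨j, ha.le, le_rfl, (not_le.1 hwj).le, hw.2⟩
    · exact ⟨j, le_rfl, le_rfl, hw⟩

theorem unitInterval.image_symm_Icc (a b : I) : σ '' Icc a b = Icc (σ b) (σ a) := by
  ext x
  constructor
  · rintro ⟨y, ⟨hay, hyb⟩, rfl⟩
    exact ⟨symm_le_symm.2 hyb, symm_le_symm.2 hay⟩
  · rintro ⟨hbx, hxa⟩
    exact ⟨σ x, ⟨le_symm_comm.1 hxa, symm_le_comm.1 hbx⟩, symm_symm x⟩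

namespace Path

variable {x y z : X}

theorem symm_image_Icc (γ : Path x y) (a b : I) :
    γ.symm '' Icc a b = γ '' Icc (σ b) (σ a) := by
  rw [← unitInterval.image_symm_Icc, image_image]
  rfl

theorem trans_apply_of_le_half (γ₁ : Path x y) (γ₂ : Path y z) {w : I} (hw : (w : ℝ) ≤ 1 / 2) :
    γ₁.trans γ₂ w = γ₁ (projIcc 0 1 zero_le_one (2 * w)) := by
  rw [← extend_extends', extend_trans_of_le_half _ _ hw]
  rfl

theorem trans_apply_of_half_le (γ₁ : Path x y) (γ₂ : Path y z) {w : I} (hw : 1 / 2 ≤ (w : ℝ)) :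
    γ₁.trans γ₂ w = γ₂ (projIcc 0 1 zero_le_one (2 * w - 1)) := by
  rw [← extend_extends', extend_trans_of_half_le _ _ hw]
  rfl

theorem image_Icc_subset_trans_left (γ₁ : Path x y) (γ₂ : Path y z) {a b : I}
    (ha : (a : ℝ) ≤ 1 / 2) :
    γ₁ '' Icc (projIcc 0 1 zero_le_one (2 * a)) (projIcc 0 1 zero_le_one (2 * b)) ⊆
      γ₁.trans γ₂ '' Icc a b := by
  rintro _ ⟨u, ⟨hau, hub⟩, rfl⟩
  have hau' : 2 * (a : ℝ) ≤ u := by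
    have := Subtype.coe_le_coe.2 hau
    rwa [coe_projIcc, min_eq_right (by linarith), max_eq_right (by linarith [a.2.1])] at this
  have hub' : (u : ℝ) ≤ 2 * b := (Subtype.coe_le_coe.2 hub).trans <| by
    rw [coe_projIcc]
    exact max_le (by linarith [b.2.1]) (min_le_right _ _)
  refine ⟨⟨u / 2, by linarith [u.2.1], by linarith [u.2.2]⟩,
    ⟨Subtype.coe_le_coe.1 ?_, Subtype.coe_le_coe.1 ?_⟩, ?_⟩
  · change (a : ℝ) ≤ u / 2
    linarith
  · change (u : ℝ) / 2 ≤ b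
    linarith
  · rw [trans_apply_of_le_half _ _ (show (u : ℝ) / 2 ≤ 1 / 2 by linarith [u.2.2])]
    congr 1
    rw [mul_div_cancel₀ _ two_ne_zero, projIcc_val]

theorem image_Icc_subset_trans_right (γ₁ : Path x y) (γ₂ : Path y z) {a b : I}
    (hb : 1 / 2 ≤ (b : ℝ)) :
    γ₂ '' Icc (projIcc 0 1 zero_le_one (2 * a - 1)) (projIcc 0 1 zero_le_one (2 * b - 1)) ⊆
      γ₁.trans γ₂ '' Icc a b := by
  rintro _ ⟨u, ⟨hau, hub⟩, rfl⟩
  have hau' : 2 * (a : ℝ) - 1 ≤ u := le_trans (by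
    rw [coe_projIcc, min_eq_right (by linarith [a.2.2])]
    exact le_max_right _ _) (Subtype.coe_le_coe.2 hau)
  have hub' : (u : ℝ) ≤ 2 * b - 1 := by
    have := Subtype.coe_le_coe.2 hub
    rwa [coe_projIcc, min_eq_right (by linarith [b.2.2]), max_eq_right (by linarith)] at this
  refine ⟨⟨(u + 1) / 2, by linarith [u.2.1], by linarith [u.2.2]⟩,
    ⟨Subtype.coe_le_coe.1 ?_, Subtype.coe_le_coe.1 ?_⟩, ?_⟩
  · change (a : ℝ) ≤ (u + 1) / 2
    linarith
  · change ((u : ℝ) + 1) / 2 ≤ b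
    linarith
  · rw [trans_apply_of_half_le _ _ (show 1 / 2 ≤ ((u : ℝ) + 1) / 2 by linarith [u.2.1])]
    congr 1
    rw [mul_div_cancel₀ _ two_ne_zero, add_sub_cancel_right, projIcc_val]

end Path

namespace HClose

variable {a b c : X}

protected theorem refl (f : Path a b) : HClose f f :=
  fun _ _ _ _ _ _ _ hfU => ⟨f, hfU, fun _ => rfl, .refl f⟩

/-- Refine to the strictly increasing enumeration of the partition points and give each piece the
intersection of the `U i` whose interval contains it. -/
theorem exists_of_any_partition {f g : Path a b} (hfg : HClose f g) {n : ℕ}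
    (t : Fin (n + 1) → I) (ht0 : t 0 = 0) (htn : t (Fin.last n) = 1) (U : Fin n → Set X)
    (hU : ∀ i, IsOpen (U i)) (hgU : ∀ i, g '' Icc (t i.castSucc) (t i.succ) ⊆ U i) :
    ∃ γ : Path a b, (∀ i, γ '' Icc (t i.castSucc) (t i.succ) ⊆ U i) ∧
      (∀ i, γ (t i) = g (t i)) ∧ γ.Homotopic f := by
  classical
  obtain ⟨m, hm⟩ : ∃ m, (Finset.univ.image t).card = m + 1 :=
    Nat.exists_eq_add_one_of_ne_zero (Finset.card_ne_zero.2 ⟨t 0, by simp⟩)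
  set s := (Finset.univ.image t).orderEmbOfFin hm
  have hts : ∀ i, ∃ j, s j = t i := fun i => by
    rw [← Set.mem_range, Finset.range_orderEmbOfFin]
    simp
  have hs0 : s 0 = 0 := by
    obtain ⟨j, hj⟩ := hts 0
    exact le_antisymm (ht0 ▸ hj ▸ s.monotone (Fin.zero_le j)) unitInterval.nonneg'
  have hsm : s (Fin.last m) = 1 := by
    obtain ⟨j, hj⟩ := hts (Fin.last n)
    exact le_antisymm unitInterval.le_one' (htn ▸ hj ▸ s.monotone (Fin.le_last j))
  let V : Fin m → Set X := fun j =>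
    ⋂ (i) (_ : Icc (s j.castSucc) (s j.succ) ⊆ Icc (t i.castSucc) (t i.succ)), U i
  have hV : ∀ j, IsOpen (V j) := fun j =>
    isOpen_iInter_of_finite fun i => isOpen_iInter_of_finite fun _ => hU i
  have hgV : ∀ j, g '' Icc (s j.castSucc) (s j.succ) ⊆ V j := fun j =>
    subset_iInter₂ fun i hi => (image_mono hi).trans (hgU i)
  obtain ⟨γ, hγV, hγs, hγf⟩ := hfg m s hs0 hsm s.strictMono V hV hgV
  have hγt : ∀ i, γ (t i) = g (t i) := fun i => by
    obtain ⟨j, hj⟩ := hts i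
    exact hj ▸ hγs j
  refine ⟨γ, ?_, hγt, hγf⟩
  rintro i _ ⟨w, hw, rfl⟩
  obtain ⟨k, hk⟩ := hts i.castSucc
  obtain ⟨l, hl⟩ := hts i.succ
  rcases lt_or_ge k l with hkl | hlk
  · obtain ⟨j, hkj, hjl, hwj⟩ := Fin.exists_mem_Icc_castSucc_succ s hkl (hk ▸ hl ▸ hw)
    have hji : Icc (s j.castSucc) (s j.succ) ⊆ Icc (t i.castSucc) (t i.succ) :=
      hk ▸ hl ▸ Icc_subset_Icc (s.monotone hkj) (s.monotone hjl)
    exact mem_iInter₂.1 (hγV j ⟨w, hwj, rfl⟩) i hji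
  · -- the interval `[t i.castSucc, t i.succ]` is at most a point
    have hw' : w = t i.castSucc := le_antisymm (hw.2.trans (hl ▸ hk ▸ s.monotone hlk)) hw.1
    rw [hw', hγt]
    exact hgU i ⟨_, hw' ▸ hw, rfl⟩

protected theorem symm {f g : Path a b} (hfg : HClose f g) : HClose f.symm g.symm := by
  intro n t ht0 htn ht U hU hgU
  obtain ⟨γ, hγU, hγt, hγf⟩ := hfg n (fun i => σ (t i.rev)) (by simp [htn]) (by simp [ht0])
    (unitInterval.strictAnti_symm.comp (ht.comp_strictAnti Fin.rev_strictAnti))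
    (fun i => U i.rev) (fun i => hU i.rev) fun i => by
      simpa only [Fin.rev_castSucc, Fin.rev_succ, Path.symm_image_Icc] using hgU i.rev
  refine ⟨γ.symm, fun i => ?_, fun i => ?_, hγf.symm₂⟩
  · simpa only [Path.symm_image_Icc, Fin.rev_castSucc, Fin.rev_succ, Fin.rev_rev] using hγU i.rev
  · simpa only [Path.symm_apply, Function.comp_apply, Fin.rev_rev] using hγt i.rev

protected theorem trans {f₁ g₁ : Path a b} {f₂ g₂ : Path b c} (h₁ : HClose f₁ g₁)
    (h₂ : HClose f₂ g₂) : HClose (f₁.trans f₂) (g₁.trans g₂) := by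
  intro n t ht0 htn _ U hU hgU
  -- `γ₁` only has to respect the `U i` whose piece meets `[0, 1/2]`, `γ₂` those meeting `[1/2, 1]`
  let L : Fin n → Set X := fun i => {p | (t i.castSucc : ℝ) ≤ 1 / 2 → p ∈ U i}
  let R : Fin n → Set X := fun i => {p | 1 / 2 ≤ (t i.succ : ℝ) → p ∈ U i}
  have isOpen_imp (P : Prop) {V : Set X} (hV : IsOpen V) : IsOpen {p | P → p ∈ V} := by
    by_cases hP : P <;> simp [hP, hV]
  have double_mono : Monotone fun w : I => projIcc 0 1 zero_le_one (2 * (w : ℝ)) :=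
    fun _ _ huv => monotone_projIcc _ (by gcongr)
  have double_sub_mono : Monotone fun w : I => projIcc 0 1 zero_le_one (2 * (w : ℝ) - 1) :=
    fun _ _ huv => monotone_projIcc _ (by gcongr)
  obtain ⟨γ₁, hγ₁L, hγ₁t, hγ₁f⟩ := h₁.exists_of_any_partition
    (fun i => projIcc 0 1 zero_le_one (2 * t i)) (by simp [ht0]) (by simp [htn]) L
    (fun i => isOpen_imp _ (hU i)) fun i _ hp hi => hgU i (g₁.image_Icc_subset_trans_left g₂ hi hp)
  obtain ⟨γ₂, hγ₂R, hγ₂t, hγ₂f⟩ := h₂.exists_of_any_partition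
    (fun i => projIcc 0 1 zero_le_one (2 * t i - 1)) (by simp [ht0]) (by norm_num [htn]) R
    (fun i => isOpen_imp _ (hU i)) fun i _ hp hi => hgU i (g₁.image_Icc_subset_trans_right g₂ hi hp)
  have hγt : ∀ i, γ₁.trans γ₂ (t i) = g₁.trans g₂ (t i) := fun i => by
    rcases le_total (t i : ℝ) (1 / 2) with h | h
    · rw [Path.trans_apply_of_le_half _ _ h, Path.trans_apply_of_le_half _ _ h, hγ₁t]
    · rw [Path.trans_apply_of_half_le _ _ h, Path.trans_apply_of_half_le _ _ h, hγ₂t]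
  refine ⟨γ₁.trans γ₂, ?_, hγt, hγ₁f.hcomp hγ₂f⟩
  rintro i _ ⟨w, hw, rfl⟩
  rcases le_total (w : ℝ) (1 / 2) with h | h
  · rw [Path.trans_apply_of_le_half _ _ h]
    exact hγ₁L i ⟨_, ⟨double_mono hw.1, double_mono hw.2⟩, rfl⟩
      ((Subtype.coe_le_coe.2 hw.1).trans h)
  · rw [Path.trans_apply_of_half_le _ _ h]
    exact hγ₂R i ⟨_, ⟨double_sub_mono hw.1, double_sub_mono hw.2⟩, rfl⟩
      (h.trans (Subtype.coe_le_coe.2 hw.2))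

end HClose

section PathClass

variable {x y : X}

open FundamentalGroup Path.Homotopic.Quotient

theorem pathClass_trans (f g : Path x x) : pathClass (f.trans g) = pathClass g * pathClass f := rfl

theorem pathClass_refl : pathClass (Path.refl x) = 1 := rfl

theorem pathClass_symm_trans_trans (β : Path x y) (h : Path x x) :
    pathClass ((β.symm.trans h).trans β) = fundamentalGroupMulEquivOfPath β (pathClass h) :=
  Quotient.sound (Path.Homotopic.trans_assoc _ _ _)

theorem pathClass_trans_trans_symm (β : Path x y) (f : Path y y) :
    pathClass ((β.trans f).trans β.symm) =
      (fundamentalGroupMulEquivOfPath β).symm (pathClass f) := by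
  rw [MulEquiv.eq_symm_apply, ← pathClass_symm_trans_trans]
  change mk _ = mk _
  simp only [mk_trans, mk_symm, trans_assoc]
  rw [← trans_assoc (symm _) (mk β), symm_trans, refl_trans, trans_refl]

end PathClass

theorem pathClass_conj_mem_qsSet {x y : X} {H : Set (FundamentalGroup X x)} {β : Path x y}
    {α : Path y y} (hα : pathClass α ∈ qsSet y
      {q | ∃ h : Path x x, pathClass h ∈ H ∧ q = pathClass ((β.symm.trans h).trans β)}) :
    pathClass ((β.trans α).trans β.symm) ∈ qsSet x H := by
  obtain ⟨f, h', hfα, ⟨h, hH, hh'⟩, hfh'⟩ := hα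
  refine ⟨(β.trans f).trans β.symm, (β.trans h').trans β.symm, ?_, ?_,
    ((HClose.refl β).trans hfh').trans (HClose.refl β.symm)⟩
  · rw [pathClass_trans_trans_symm, pathClass_trans_trans_symm, hfα]
  · rwa [pathClass_trans_trans_symm, hh', pathClass_symm_trans_trans, MulEquiv.symm_apply_apply]

def qsSubgroup (x : X) (H : Subgroup (FundamentalGroup X x)) : Subgroup (FundamentalGroup X x) where
  carrier := qsSet x H
  one_mem' := ⟨Path.refl x, Path.refl x, rfl, H.one_mem, HClose.refl _⟩
  mul_mem' := by
    rintro _ _ ⟨f₁, h₁, rfl, hh₁, hfh₁⟩ ⟨f₂, h₂, rfl, hh₂, hfh₂⟩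
    exact ⟨f₂.trans f₁, h₂.trans h₁, rfl, H.mul_mem hh₁ hh₂, hfh₂.trans hfh₁⟩
  inv_mem' := by
    rintro _ ⟨f, h, rfl, hh, hfh⟩
    exact ⟨f.symm, h.symm, rfl, H.inv_mem hh, hfh.symm⟩

/-- if `β` is a path from `x` to `y` and `α` a loop at `y` with
`[α] ∈ π_{[β]⁻¹H[β]}^qs(X, y)`, then `[β * α * β⁻¹] ∈ π_H^qs(X, x)`; consequently, for a
subgroup `H`, the subgroup generated by all such classes equals `π_H^qs(X, x)`. -/
theorem stmt12 (x : X) :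
    (∀ (H : Set (FundamentalGroup X x)) (y : X) (β : Path x y) (α : Path y y),
      pathClass α ∈ qsSet y { q | ∃ h : Path x x, pathClass h ∈ H ∧
          q = pathClass ((β.symm.trans h).trans β) } →
      pathClass ((β.trans α).trans β.symm) ∈ qsSet x H) ∧
    (∀ H : Subgroup (FundamentalGroup X x),
      (Subgroup.closure { p | ∃ (y : X) (β : Path x y) (α : Path y y),
          pathClass α ∈ qsSet y { q | ∃ h : Path x x, pathClass h ∈ H ∧
            q = pathClass ((β.symm.trans h).trans β) } ∧
          p = pathClass ((β.trans α).trans β.symm) } :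
        Set (FundamentalGroup X x)) = qsSet x ↑H) := by
  refine ⟨fun H y β α => pathClass_conj_mem_qsSet, fun H => ?_⟩
  change _ = (qsSubgroup x H : Set (FundamentalGroup X x))
  refine congrArg SetLike.coe (le_antisymm ?_ ?_)
  · rw [Subgroup.closure_le]
    rintro _ ⟨y, β, α, hα, rfl⟩
    exact pathClass_conj_mem_qsSet hα
  · rintro _ ⟨f, h, rfl, hH, hfh⟩
    refine Subgroup.subset_closure ⟨x, Path.refl x, f, ⟨f, h, rfl, ⟨h, hH, ?_⟩, hfh⟩, ?_⟩ <;>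
      simp [pathClass_trans, pathClass_refl]
end
end

section
/- Let X be a topological space and x ∈ X. If the quasi-small loop group π₁^qs(X, x) is trivial, then X is homotopically path Hausdorff relative to the trivial subgroup of π₁(X, x) (i.e., for every pair of non-homotopic paths α, β starting at x with α(1) = β(1), there exist a partition 0 = t₀ < ⋯ < t_n = 1 and open sets U₁, …, U_n with α([t_{i-1}, t_i]) ⊆ U_i such that every path γ with γ([t_{i-1}, t_i]) ⊆ U_i and γ(t_i) = α(t_i) for all i is not homotopic to β rel ∂I). -/
open unitInterval

noncomputable section

attribute [local instance] Path.Homotopic.setoid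

variable {X Y : Type*} [TopologicalSpace X] [TopologicalSpace Y]

/-!
If `α` and `β` cannot be separated, then `β` is homotopically close to `α`. Closeness survives
concatenation with `α⁻¹` on the right, because a subdivision adapted to `α · α⁻¹` restricts, after
doubling its first half, to one adapted to `α`. So `β · α⁻¹` is close to the null-homotopic loop
`α · α⁻¹`, i.e. quasi-small, hence trivial, and `α ≃ β`.
-/

theorem pathClass_trans_symm_eq_one_iff {x y : X} (p q : Path x y) :
    pathClass (p.trans q.symm) = 1 ↔ p.Homotopic q := by
  rw [← Path.Homotopic.Quotient.eq]
  change (Path.Homotopic.Quotient.mk p).trans (Path.Homotopic.Quotient.mk q).symm = .refl x ↔ _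
  constructor
  · intro h
    simpa using congrArg (·.trans (Path.Homotopic.Quotient.mk q)) h
  · intro h
    simp [h]

namespace Path

variable {a b c : X}

theorem trans_apply_of_eq_two_mul (p : Path a b) (q : Path b c) {w u : I}
    (h : (u : ℝ) = 2 * w) : (p.trans q) w = p u := by
  rw [← extend_extends', extend_trans_of_le_half _ _ (by linarith [u.2.2]), ← h, extend_extends']

theorem trans_apply_eq_of_half_le (p p' : Path a b) (q : Path b c) {w : I}
    (hw : 1 / 2 ≤ (w : ℝ)) : (p.trans q) w = (p'.trans q) w := by
  rw [← extend_extends', ← extend_extends', extend_trans_of_half_le _ _ hw,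
    extend_trans_of_half_le _ _ hw]

end Path

section Subdivision

variable {n : ℕ}

def IsSubdivision (t : Fin (n + 1) → I) : Prop :=
  t 0 = 0 ∧ t (Fin.last n) = 1 ∧ StrictMono t

def Path.SubordinateTo {a b : X} (γ : Path a b) (t : Fin (n + 1) → I) (U : Fin n → Set X) :
    Prop :=
  ∀ i : Fin n, γ '' Set.Icc (t i.castSucc) (t i.succ) ⊆ U i

theorem IsSubdivision.exists_lt_iff_lt {t : Fin (n + 1) → I} (ht : IsSubdivision t) {c : ℝ}
    (hc₀ : 0 < c) (hc₁ : c ≤ 1) :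
    ∃ k, 0 < k ∧ k ≤ n ∧ ∀ i : Fin (n + 1), (t i : ℝ) < c ↔ (i : ℕ) < k := by
  classical
  have hex : ∃ k, ∃ hk : k < n + 1, c ≤ t ⟨k, hk⟩ := ⟨n, n.lt_succ_self, by
    rw [show (⟨n, _⟩ : Fin (n + 1)) = Fin.last n from rfl, ht.2.1]; exact hc₁⟩
  obtain ⟨hk, hck⟩ := Nat.find_spec hex
  refine ⟨Nat.find hex, ?_, by omega, fun i => ⟨fun hi => ?_, fun hi => ?_⟩⟩
  · refine Nat.pos_of_ne_zero fun h0 => ?_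
    simp only [h0, Fin.zero_eta, ht.1, Set.Icc.coe_zero] at hck
    linarith
  · by_contra hki
    have : (⟨Nat.find hex, hk⟩ : Fin (n + 1)) ≤ i := Fin.le_def.2 (not_lt.1 hki)
    linarith [Subtype.coe_le_coe.2 (ht.2.2.monotone this)]
  · by_contra hci
    exact Nat.find_min hex hi ⟨i.2, not_lt.1 hci⟩

/-- The subdivision that `t` induces on the first factor of a concatenation. -/
theorem IsSubdivision.exists_double_of_lt_half {t : Fin (n + 1) → I} (ht : IsSubdivision t) :
    ∃ (k : ℕ) (hk : k ≤ n) (s : Fin (k + 1) → I), IsSubdivision s ∧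
      (∀ i : Fin (n + 1), (t i : ℝ) < 1 / 2 ↔ (i : ℕ) < k) ∧
      ∀ j, (s j : ℝ) = min 1 (2 * (t (Fin.castLE (Nat.succ_le_succ hk) j) : ℝ)) := by
  obtain ⟨k, hk₀, hkn, hk⟩ := ht.exists_lt_iff_lt (c := 1 / 2) (by norm_num) (by norm_num)
  set τ : Fin (k + 1) → I := fun j => t (Fin.castLE (Nat.succ_le_succ hkn) j)
  set s : Fin (k + 1) → I := fun j => Set.projIcc 0 1 zero_le_one (2 * (τ j : ℝ))
  have hs : ∀ j, (s j : ℝ) = min 1 (2 * (τ j : ℝ)) := fun j =>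
    max_eq_right (le_min zero_le_one (mul_nonneg zero_le_two (τ j).2.1))
  have hτ : ∀ j : Fin (k + 1), (τ j : ℝ) < 1 / 2 ↔ (j : ℕ) < k := fun j => hk _
  refine ⟨k, hkn, s, ⟨Subtype.ext ?_, Subtype.ext ?_, fun i j hij => ?_⟩, hk, hs⟩
  · rw [hs, min_eq_right] <;> simp [τ, ht.1]
  · have : ¬ (τ (Fin.last k) : ℝ) < 1 / 2 := fun h => lt_irrefl k ((hτ _).1 h)
    rw [hs, min_eq_left (by linarith)]
    rfl
  · have hik : (i : ℕ) < k := lt_of_lt_of_le hij j.is_le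
    have hτij : (τ i : ℝ) < τ j := ht.2.2 (show Fin.castLE _ i < Fin.castLE _ j from hij)
    show (s i : ℝ) < s j
    rw [hs, hs, min_eq_right (by linarith [(hτ i).2 hik]), lt_min_iff]
    exact ⟨by linarith [(hτ i).2 hik], by linarith⟩

theorem IsSubdivision.exists_subordinate_trans_left {a b c : X} {t : Fin (n + 1) → I}
    (ht : IsSubdivision t) {U : Fin n → Set X} (hUo : ∀ i, IsOpen (U i))
    (p : Path a b) (q : Path b c) (hpq : (p.trans q).SubordinateTo t U) :
    ∃ (m : ℕ) (s : Fin (m + 1) → I) (V : Fin m → Set X), IsSubdivision s ∧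
      (∀ j, IsOpen (V j)) ∧ p.SubordinateTo s V ∧
      ∀ δ : Path a b, δ.SubordinateTo s V → (∀ j, δ (s j) = p (s j)) →
        (δ.trans q).SubordinateTo t U ∧ ∀ i, (δ.trans q) (t i) = (p.trans q) (t i) := by
  obtain ⟨k, hkn, s, hsub, hk, hs⟩ := ht.exists_double_of_lt_half
  have hkn' : k + 1 ≤ n + 1 := Nat.succ_le_succ hkn
  have hs_lt : ∀ j : Fin (k + 1), (j : ℕ) < k → (s j : ℝ) = 2 * t (Fin.castLE hkn' j) :=
    fun j hj => (hs j).trans (min_eq_right (by linarith [(hk (Fin.castLE hkn' j)).2 hj]))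
  refine ⟨k, s, fun j => U (Fin.castLE hkn j), hsub, fun j => hUo _, ?_,
    fun δ hδ hδs => ⟨?_, ?_⟩⟩
  · rintro j _ ⟨u, hu, rfl⟩
    let w : I := ⟨u / 2, by linarith [u.2.1], by linarith [u.2.2]⟩
    rw [← p.trans_apply_of_eq_two_mul q (w := w) (by simp [w]; ring)]
    have hl : (s j.castSucc : ℝ) = 2 * t (Fin.castLE hkn j).castSucc := hs_lt _ j.2
    have hr : (s j.succ : ℝ) ≤ 2 * t (Fin.castLE hkn j).succ := (hs _).trans_le (min_le_right _ _)
    have hu₁ : (s j.castSucc : ℝ) ≤ u := hu.1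
    have hu₂ : (u : ℝ) ≤ s j.succ := hu.2
    refine hpq (Fin.castLE hkn j) ⟨w, ⟨?_, ?_⟩, rfl⟩
    · show (t _ : ℝ) ≤ u / 2; linarith
    · show (u : ℝ) / 2 ≤ t _; linarith
  · rintro i _ ⟨w, hw, rfl⟩
    rcases lt_or_ge (w : ℝ) (1 / 2) with hw_half | hw_half
    · have hik : (i : ℕ) < k := (hk i.castSucc).1 (lt_of_le_of_lt hw.1 hw_half)
      let u : I := ⟨2 * w, by linarith [w.2.1], by linarith⟩
      rw [δ.trans_apply_of_eq_two_mul q (u := u) rfl]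
      have hl : (s (⟨i, hik⟩ : Fin k).castSucc : ℝ) = 2 * t i.castSucc := hs_lt _ hik
      have hr : (s (⟨i, hik⟩ : Fin k).succ : ℝ) = min 1 (2 * (t i.succ : ℝ)) := hs _
      have hw₁ : (t i.castSucc : ℝ) ≤ w := hw.1
      have hw₂ : (w : ℝ) ≤ t i.succ := hw.2
      refine hδ ⟨i, hik⟩ ⟨u, ⟨?_, ?_⟩, rfl⟩
      · show _ ≤ 2 * (w : ℝ); linarith
      · show 2 * (w : ℝ) ≤ _; rw [hr]; exact le_min (by linarith) (by linarith)
    · rw [δ.trans_apply_eq_of_half_le p q hw_half]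
      exact hpq i ⟨w, hw, rfl⟩
  · intro i
    rcases lt_or_ge (t i : ℝ) (1 / 2) with hi | hi
    · have hik := (hk i).1 hi
      have h2 : (s ⟨i, by omega⟩ : ℝ) = 2 * t i := hs_lt _ hik
      rw [δ.trans_apply_of_eq_two_mul q h2, p.trans_apply_of_eq_two_mul q h2, hδs]
    · exact δ.trans_apply_eq_of_half_le p q hi

end Subdivision

theorem HClose.trans_right {a b c : X} {f g : Path a b} (h : HClose f g) (q : Path b c) :
    HClose (f.trans q) (g.trans q) := by
  intro n t ht₀ ht₁ ht U hUo hgU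
  obtain ⟨m, s, V, hs, hVo, hgV, hlift⟩ :=
    IsSubdivision.exists_subordinate_trans_left ⟨ht₀, ht₁, ht⟩ hUo g q hgU
  obtain ⟨δ, hδV, hδs, hδf⟩ := h m s hs.1 hs.2.1 hs.2.2 V hVo hgV
  obtain ⟨hδU, hδt⟩ := hlift δ hδV hδs
  exact ⟨δ.trans q, hδU, hδt, hδf.hcomp (.refl q)⟩

/-- if `π₁^qs(X, x)` is trivial, then `X` is homotopically path
Hausdorff relative to the trivial subgroup of `π₁(X, x)`. -/
theorem stmt14 (x : X) (h : qs x = {(1 : FundamentalGroup X x)}) :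
    HPHausdorffRel x ((⊥ : Subgroup (FundamentalGroup X x)) : Set (FundamentalGroup X x)) := by
  intro y α β hαβ
  by_contra hsep
  have hβα : HClose β α := by
    intro n t ht₀ ht₁ ht U hUo hαU
    by_contra hfar
    refine hsep ⟨n, t, ht₀, ht₁, ht, U, hUo, hαU, fun γ hγU hγt => ?_⟩
    rw [SetLike.mem_coe, Subgroup.mem_bot, pathClass_trans_symm_eq_one_iff]
    exact fun hγβ => hfar ⟨γ, hγU, hγt, hγβ⟩
  have hqs : pathClass (β.trans α.symm) ∈ qs x :=
    ⟨_, α.trans α.symm, rfl, (pathClass_trans_symm_eq_one_iff α α).2 (.refl α),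
      hβα.trans_right α.symm⟩
  rw [h, Set.mem_singleton_iff, pathClass_trans_symm_eq_one_iff] at hqs
  exact hαβ ((pathClass_trans_symm_eq_one_iff α β).2 hqs.symm)
end
end
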